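/- arXiv:2112.00509 — 7 statements merged into one kernel-verified Lean document; each statement's English description precedes it below -/
import Mathlib

section
/- If τ is an MVD-coloring of a connected graph G and S ⊆ V(G) is such that the induced subgraph G[S] is connected, then the restriction of τ to G[S] is an MVD-coloring of G[S]. -/
open SimpleGraph

variable {V : Type*}

/-- There is an `x`–`y` walk all of whose vertices lie in `S`. -/
def ReachableWithin (G : SimpleGraph V) (S : Set V) (x y : V) : Prop :=
  ∃ p : G.Walk x y, ∀ v ∈ p.support, v ∈ S

/-- The vertex set `S` induces a (nonempty) connected subgraph of `G`. -/
def ConnectedOn (G : SimpleGraph V) (S : Set V) : Prop :=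
  S.Nonempty ∧ ∀ x ∈ S, ∀ y ∈ S, ReachableWithin G S x y

/-- `S` is a vertex cut of `G` separating `x` from `y`. -/
def IsCutBetween (G : SimpleGraph V) (x y : V) (S : Set V) : Prop :=
  x ∉ S ∧ y ∉ S ∧ ∀ p : G.Walk x y, ∃ v ∈ p.support, v ∈ S

/-- All vertices of `S` receive the same color under `τ`. -/
def Monochromatic (τ : V → ℕ) (S : Set V) : Prop :=
  ∀ u ∈ S, ∀ v ∈ S, τ u = τ v

/-- `τ` is an MVD-coloring: every pair of distinct nonadjacent vertices is
separated by a monochromatic vertex cut. -/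
def IsMVDColoring (G : SimpleGraph V) (τ : V → ℕ) : Prop :=
  ∀ x y : V, x ≠ y → ¬ G.Adj x y →
    ∃ S : Set V, IsCutBetween G x y S ∧ Monochromatic τ S

/-- The monochromatic vertex-disconnection number: the maximum number of colors
used by an MVD-coloring. -/
noncomputable def mvd (G : SimpleGraph V) : ℕ :=
  sSup {k | ∃ τ : V → ℕ, IsMVDColoring G τ ∧ (Set.range τ).ncard = k}

/-- An `mvd`-coloring: an MVD-coloring attaining `mvd G` colors. -/
def IsOptimalMVDColoring (G : SimpleGraph V) (τ : V → ℕ) : Prop :=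
  IsMVDColoring G τ ∧ (Set.range τ).ncard = mvd G

/-- The subgraph of `G` induced on `S` has no cut vertex. -/
def NoCutVertexOn (G : SimpleGraph V) (S : Set V) : Prop :=
  ∀ v ∈ S, ∀ x ∈ S \ {v}, ∀ y ∈ S \ {v}, ReachableWithin G (S \ {v}) x y

/-- `B` is a block of `G`: a maximal vertex set inducing a connected subgraph
with no cut vertex. -/
def IsBlock (G : SimpleGraph V) (B : Set V) : Prop :=
  ConnectedOn G B ∧ NoCutVertexOn G B ∧
    ∀ C : Set V, B ⊆ C → ConnectedOn G C → NoCutVertexOn G C → C = B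

/-- `G` is 2-connected. -/
def TwoConnected (G : SimpleGraph V) : Prop :=
  3 ≤ Nat.card V ∧ ∀ v : V, ConnectedOn G {u | u ≠ v}

/-- `G` is minimally 2-connected. -/
def MinimallyTwoConnected (G : SimpleGraph V) : Prop :=
  TwoConnected G ∧ ∀ e ∈ G.edgeSet, ¬ TwoConnected (G.deleteEdges {e})

section

variable {W : Type*} {G : SimpleGraph V} {H : SimpleGraph W}

theorem IsCutBetween.comap (f : G →g H) {x y : V} {C : Set W}
    (hC : IsCutBetween H (f x) (f y) C) : IsCutBetween G x y (f ⁻¹' C) := by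
  obtain ⟨hxC, hyC, hcut⟩ := hC
  refine ⟨hxC, hyC, fun p => ?_⟩
  obtain ⟨w, hw, hwC⟩ := hcut (p.map f)
  rw [Walk.support_map, List.mem_map] at hw
  obtain ⟨v, hv, rfl⟩ := hw
  exact ⟨v, hv, hwC⟩

theorem Monochromatic.comap (f : V → W) {τ : W → ℕ} {C : Set W} (hC : Monochromatic τ C) :
    Monochromatic (τ ∘ f) (f ⁻¹' C) :=
  fun u hu v hv => hC (f u) hu (f v) hv

theorem IsMVDColoring.comap (f : G ↪g H) {τ : W → ℕ} (hτ : IsMVDColoring H τ) :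
    IsMVDColoring G (τ ∘ f) := by
  intro x y hxy hadj
  obtain ⟨C, hcut, hmono⟩ := hτ (f x) (f y) (f.injective.ne hxy) (mt f.map_adj_iff.mp hadj)
  exact ⟨f ⁻¹' C, hcut.comap f.toHom, hmono.comap f⟩

end

theorem stmt1_general {V : Type*} (G : SimpleGraph V) (τ : V → ℕ)
    (hτ : IsMVDColoring G τ) (S : Set V) :
    IsMVDColoring (G.induce S) (fun v => τ v.1) :=
  hτ.comap (Embedding.induce S)

/-- Restriction of an MVD-coloring to a connected induced subgraph is an MVD-coloring. -/
theorem stmt1 {V : Type*} (G : SimpleGraph V) (hG : G.Connected) (τ : V → ℕ)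
    (hτ : IsMVDColoring G τ) (S : Set V) (hS : (G.induce S).Connected) :
    IsMVDColoring (G.induce S) (fun v => τ v.1) :=
  stmt1_general G τ hτ S
end

section
/- Let G be a 2-connected triangle-free graph of order n having an ear decomposition G_0 ⊂ G_1 ⊂ ... ⊂ G_t = G in which every ear P_i (0 ≤ i < t) has at least one internal vertex. Then mvd(G) ≤ ⌊n/2⌋. -/
/-!
Every vertex `v` of a 2-connected graph has two distinct neighbours `u`, `w`, and in a
triangle-free graph these are nonadjacent. A vertex cut separating `u` from `w` must meet the
path `u v w`, so it contains `v`; since `G - v` is connected it also contains a second vertex.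
In an MVD-coloring that cut is monochromatic, so every color class has at least two vertices,
whence there are at most `⌊n/2⌋` colors.
-/

open SimpleGraph

variable {V : Type*}

variable {G : SimpleGraph V}

lemma ReachableWithin.exists_adj_mem {S : Set V} {v y : V} (h : ReachableWithin G S v y)
    (hvy : v ≠ y) : ∃ w ∈ S, G.Adj v w := by
  obtain ⟨p, hp⟩ := h
  have hnil : ¬ p.Nil := Walk.not_nil_of_ne hvy
  exact ⟨p.snd, hp _ (List.mem_of_mem_tail (Walk.snd_mem_tail_support hnil)), p.adj_snd hnil⟩

lemma TwoConnected.exists_adj_ne (h2 : TwoConnected G) {v x y : V} (hvx : v ≠ x)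
    (hyx : y ≠ x) (hyv : y ≠ v) : ∃ w, G.Adj v w ∧ w ≠ x := by
  obtain ⟨w, hw, hvw⟩ := ((h2.2 x).2 v hvx y hyx).exists_adj_mem hyv.symm
  exact ⟨w, hvw, hw⟩

lemma TwoConnected.exists_ne_ne (h2 : TwoConnected G) (v : V) :
    ∃ a b, a ≠ v ∧ b ≠ v ∧ a ≠ b := by
  have hcard := h2.1
  have : Finite V := Nat.finite_of_card_ne_zero (by omega)
  have hcompl : 1 < ({v}ᶜ : Set V).ncard := by
    rw [Set.ncard_compl, Set.ncard_singleton]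
    omega
  exact (Set.one_lt_ncard_iff).mp hcompl

lemma TwoConnected.exists_adj_adj_ne (h2 : TwoConnected G) (v : V) :
    ∃ u w, G.Adj v u ∧ G.Adj v w ∧ u ≠ w := by
  obtain ⟨a, b, hav, hbv, hab⟩ := h2.exists_ne_ne v
  obtain ⟨u, hvu, hua⟩ := h2.exists_adj_ne hav.symm hab.symm hbv
  obtain ⟨w, hvw, hwu⟩ := h2.exists_adj_ne (G.ne_of_adj hvu) (Ne.symm hua) hav
  exact ⟨u, w, hvu, hvw, hwu.symm⟩

lemma IsCutBetween.mem_of_adj_of_adj {u v w : V} {S : Set V} (hS : IsCutBetween G u w S)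
    (hvu : G.Adj v u) (hvw : G.Adj v w) : v ∈ S := by
  obtain ⟨z, hz, hzS⟩ := hS.2.2 (.cons hvu.symm (.cons hvw .nil))
  simp only [Walk.support_cons, Walk.support_nil, List.mem_cons, List.not_mem_nil,
    or_false] at hz
  rcases hz with rfl | rfl | rfl
  · exact absurd hzS hS.1
  · exact hzS
  · exact absurd hzS hS.2.1

lemma TwoConnected.exists_mem_ne_of_isCutBetween (h2 : TwoConnected G) {x y v : V}
    {S : Set V} (hS : IsCutBetween G x y S) (hv : v ∈ S) : ∃ w ∈ S, w ≠ v := by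
  have hxv : x ≠ v := fun h => hS.1 (h ▸ hv)
  have hyv : y ≠ v := fun h => hS.2.1 (h ▸ hv)
  obtain ⟨p, hp⟩ := (h2.2 v).2 x hxv y hyv
  obtain ⟨z, hz, hzS⟩ := hS.2.2 p
  exact ⟨z, hzS, hp z hz⟩

lemma IsMVDColoring.exists_ne_color_eq (h2 : TwoConnected G) (htf : G.CliqueFree 3)
    {τ : V → ℕ} (hτ : IsMVDColoring G τ) (v : V) : ∃ w, w ≠ v ∧ τ w = τ v := by
  classical
  obtain ⟨u, w, hvu, hvw, huw⟩ := h2.exists_adj_adj_ne v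
  have huw' : ¬ G.Adj u w := fun h => htf {v, u, w} (is3Clique_triple_iff.mpr ⟨hvu, hvw, h⟩)
  obtain ⟨S, hS, hmono⟩ := hτ u w huw huw'
  have hvS := hS.mem_of_adj_of_adj hvu hvw
  obtain ⟨w', hw'S, hw'v⟩ := h2.exists_mem_ne_of_isCutBetween hS hvS
  exact ⟨w', hw'v, hmono w' hw'S v hvS⟩

lemma two_mul_ncard_range_le_card {α β : Type*} [Fintype α] {f : α → β}
    (hf : ∀ a, ∃ b, b ≠ a ∧ f b = f a) : 2 * (Set.range f).ncard ≤ Fintype.card α := by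
  classical
  rw [Set.ncard_eq_toFinset_card', Set.toFinset_range]
  refine Finset.mul_card_image_le_card Finset.univ 2 fun c hc => ?_
  obtain ⟨a, -, rfl⟩ := Finset.mem_image.mp hc
  obtain ⟨b, hba, hfb⟩ := hf a
  exact Finset.one_lt_card.mpr ⟨a, by simp, b, by simp [hfb], hba.symm⟩

theorem stmt6_general {V : Type*} [Fintype V] (G : SimpleGraph V)
    (h2 : TwoConnected G) (htf : G.CliqueFree 3) :
    mvd G ≤ Fintype.card V / 2 := by
  refine csSup_le' ?_
  rintro k ⟨τ, hτ, rfl⟩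
  have := two_mul_ncard_range_le_card (hτ.exists_ne_color_eq h2 htf)
  omega

/-- A 2-connected triangle-free graph with an ear decomposition whose every ear
has an internal vertex satisfies `mvd(G) ≤ ⌊n/2⌋`. -/
theorem stmt6 {V : Type*} [Fintype V] (G : SimpleGraph V)
    (h2 : TwoConnected G) (htf : G.CliqueFree 3)
    (t : ℕ) (H : Fin (t + 1) → G.Subgraph)
    (h0 : ∃ (v : V) (c : G.Walk v v), c.IsCycle ∧ H 0 = c.toSubgraph)
    (hear : ∀ i : Fin t, ∃ (u v : V) (p : G.Walk u v), p.IsPath ∧ 2 ≤ p.length ∧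
      u ∈ (H i.castSucc).verts ∧ v ∈ (H i.castSucc).verts ∧
      (∀ w ∈ p.support, w = u ∨ w = v ∨ w ∉ (H i.castSucc).verts) ∧
      H i.succ = H i.castSucc ⊔ p.toSubgraph)
    (hlast : H (Fin.last t) = ⊤) :
    mvd G ≤ Fintype.card V / 2 :=
  stmt6_general G h2 htf
end

section
/- If G is a minimally 2-connected graph of order n ≥ 4, then mvd(G) ≤ ⌊n/2⌋, with equality when G is a cycle. -/
open SimpleGraph

variable {V : Type*}

/-!
Deleting an edge `xy` of a triangle `xyz` in a minimally 2-connected graph must create a cut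
vertex, and only `z` can be one. A fourth vertex reaches two corners of the triangle while avoiding
the third, and the two routes join into an `x`–`y` path avoiding both `z` and the edge `xy`. So the
graph is triangle-free, and every vertex `v` has two nonadjacent neighbours `a, b`. A monochromatic
cut separating `a` from `b` contains `v` as well as a vertex of an `a`–`b` path avoiding `v`, so
every colour class has at least two vertices.

On the cycle `C_n` the colouring `i ↦ i mod ⌊n/2⌋` attains the bound: two nonadjacent vertices are
always separated by a pair `{p, p + ⌊n/2⌋}`.
-/

namespace ReachableWithin

variable {G : SimpleGraph V} {S T : Set V} {a b c x y : V}

lemma refl (ha : a ∈ S) : ReachableWithin G S a a :=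
  ⟨.nil, by simpa⟩

lemma symm (h : ReachableWithin G S a b) : ReachableWithin G S b a := by
  obtain ⟨p, hp⟩ := h
  exact ⟨p.reverse, by simpa using hp⟩

lemma trans (hab : ReachableWithin G S a b) (hbc : ReachableWithin G S b c) :
    ReachableWithin G S a c := by
  obtain ⟨p, hp⟩ := hab
  obtain ⟨q, hq⟩ := hbc
  exact ⟨p.append q, fun v hv => (Walk.mem_support_append_iff p q).1 hv |>.elim (hp v) (hq v)⟩

lemma cons (hab : G.Adj a b) (ha : a ∈ S) (h : ReachableWithin G S b c) :
    ReachableWithin G S a c := by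
  obtain ⟨p, hp⟩ := h
  exact ⟨.cons hab p, by simpa [ha] using hp⟩

lemma mono (hST : S ⊆ T) (h : ReachableWithin G S a b) : ReachableWithin G T a b := by
  obtain ⟨p, hp⟩ := h
  exact ⟨p, fun v hv => hST (hp v hv)⟩

lemma exists_adj (h : ReachableWithin G S a b) (hab : a ≠ b) : ∃ c, G.Adj a c ∧ c ∈ S := by
  obtain ⟨p, hp⟩ := h
  have hp' : ¬ p.Nil := Walk.not_nil_of_ne hab
  exact ⟨p.snd, p.adj_snd hp', hp _ (p.getVert_mem_support 1)⟩

lemma deleteEdges_of_notMem (h : ReachableWithin G S a b) (hx : x ∉ S) :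
    ReachableWithin (G.deleteEdges {s(x, y)}) S a b := by
  obtain ⟨p, hp⟩ := h
  have he : s(x, y) ∉ p.edges := fun he => hx (hp x (p.fst_mem_support_of_mem_edges he))
  exact ⟨p.toDeleteEdge _ he, by simpa using hp⟩

lemma deleteEdges (h : ReachableWithin G S a b)
    (hxy : ReachableWithin (G.deleteEdges {s(x, y)}) S x y) :
    ReachableWithin (G.deleteEdges {s(x, y)}) S a b := by
  obtain ⟨p, hp⟩ := h
  induction p with
  | nil => exact refl (hp _ (by simp))
  | @cons u w b huw q ih =>
    have hrest := ih fun v hv => hp v (by simp [hv])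
    by_cases he : s(u, w) = s(x, y)
    · rcases Sym2.eq_iff.1 he with ⟨rfl, rfl⟩ | ⟨rfl, rfl⟩
      · exact hxy.trans hrest
      · exact hxy.symm.trans hrest
    · exact cons (deleteEdges_adj.2 ⟨huw, he⟩) (hp u (by simp)) hrest

lemma diff_or_diff (h : ReachableWithin G S c a) (hab : a ≠ b) :
    ReachableWithin G (S \ {b}) c a ∨ ReachableWithin G (S \ {a}) c b := by
  obtain ⟨p, hp⟩ := h
  induction p with
  | nil => exact .inl (refl (S := S \ {b}) ⟨hp _ (by simp), hab⟩)
  | @cons u w a huw q ih =>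
    have hu : u ∈ S := hp u (by simp)
    by_cases hua : u = a
    · subst hua
      exact .inl (refl (S := S \ {b}) ⟨hu, hab⟩)
    by_cases hub : u = b
    · subst hub
      exact .inr (refl (S := S \ {a}) ⟨hu, Ne.symm hab⟩)
    rcases ih hab fun v hv => hp v (by simp [hv]) with h | h
    · exact .inl (cons huw ⟨hu, hub⟩ h)
    · exact .inr (cons huw ⟨hu, hua⟩ h)

end ReachableWithin

lemma Finset.exists_notMem_of_card_lt_natCard {s : Finset V} (hs : s.card < Nat.card V) :
    ∃ u, u ∉ s := by
  by_contra! h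
  have : Nat.card V ≤ s.card := by
    rw [← Set.ncard_univ, ← Set.ncard_coe_finset]
    exact Set.ncard_le_ncard fun u _ => h u
  omega

section Connectivity

variable {G : SimpleGraph V} {S T : Set V} {a b u v x y z : V}

namespace IsCutBetween

lemma symm (h : IsCutBetween G x y S) : IsCutBetween G y x S := by
  refine ⟨h.2.1, h.1, fun p => ?_⟩
  obtain ⟨v, hv, hvS⟩ := h.2.2 p.reverse
  exact ⟨v, by simpa using hv, hvS⟩

lemma exists_mem_of_reachableWithin (h : IsCutBetween G x y S)
    (hxy : ReachableWithin G T x y) : ∃ v ∈ S, v ∈ T := by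
  obtain ⟨p, hp⟩ := hxy
  obtain ⟨v, hv, hvS⟩ := h.2.2 p
  exact ⟨v, hvS, hp v hv⟩

lemma mem_of_adj_of_adj_s7 (h : IsCutBetween G x y S) (hxv : G.Adj x v) (hvy : G.Adj v y) :
    v ∈ S := by
  obtain ⟨w, hw, hwS⟩ := h.2.2 (.cons hxv (.cons hvy .nil))
  simp only [Walk.support_cons, Walk.support_nil, List.mem_cons, List.not_mem_nil,
    or_false] at hw
  rcases hw with rfl | rfl | rfl
  · exact absurd hwS h.1
  · exact hwS
  · exact absurd hwS h.2.1

end IsCutBetween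

lemma isCutBetween_of_invariant (P : V → Prop) (hx : x ∉ S) (hy : y ∉ S) (hxy : ¬ (P x ↔ P y))
    (hP : ∀ u w, G.Adj u w → u ∉ S → w ∉ S → (P u ↔ P w)) : IsCutBetween G x y S := by
  refine ⟨hx, hy, fun p => ?_⟩
  by_contra! hp
  induction p with
  | nil => exact hxy Iff.rfl
  | @cons u w y huw q ih =>
    have hw : w ∉ S := hp w (by simp)
    exact ih hw hy (fun h => hxy ((hP u w huw hx hw).trans h)) fun v hv => hp v (by simp [hv])

namespace TwoConnected

lemma reachableWithin (h : TwoConnected G) (hav : a ≠ v) (hbv : b ≠ v) :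
    ReachableWithin G {u | u ≠ v} a b :=
  (h.2 v).2 a hav b hbv

lemma exists_adj_ne_s7 (h : TwoConnected G) (hav : a ≠ v) : ∃ w, G.Adj v w ∧ w ≠ a := by
  classical
  obtain ⟨d, hd⟩ := Finset.exists_notMem_of_card_lt_natCard
    ((Finset.card_le_two (a := v) (b := a)).trans_lt h.1)
  simp only [Finset.mem_insert, Finset.mem_singleton, not_or] at hd
  exact (h.reachableWithin hav.symm hd.2).exists_adj (Ne.symm hd.1)

lemma exists_adj_adj_ne_s7 (h : TwoConnected G) (v : V) : ∃ a b, G.Adj v a ∧ G.Adj v b ∧ a ≠ b := by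
  classical
  obtain ⟨d, hd⟩ := Finset.exists_notMem_of_card_lt_natCard
    ((Finset.card_singleton v).trans_lt (by have := h.1; omega))
  obtain ⟨a, hva, -⟩ := h.exists_adj_ne_s7 (Finset.mem_singleton.not.1 hd)
  obtain ⟨b, hvb, hba⟩ := h.exists_adj_ne_s7 hva.ne'
  exact ⟨a, b, hva, hvb, hba.symm⟩

lemma deleteEdges (h : TwoConnected G)
    (hxy : ∀ v, v ≠ x → v ≠ y → ReachableWithin (G.deleteEdges {s(x, y)}) {u | u ≠ v} x y) :
    TwoConnected (G.deleteEdges {s(x, y)}) := by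
  refine ⟨h.1, fun v => ⟨(h.2 v).1, fun a ha b hb => ?_⟩⟩
  have hab := h.reachableWithin ha hb
  by_cases hvx : v = x
  · exact hab.deleteEdges_of_notMem (by simp [hvx])
  by_cases hvy : v = y
  · exact Sym2.eq_swap ▸ hab.deleteEdges_of_notMem (by simp [hvy])
  exact hab.deleteEdges (hxy v hvx hvy)

end TwoConnected

namespace MinimallyTwoConnected

lemma not_reachableWithin_deleteEdges (hG : MinimallyTwoConnected G)
    (hxy : G.Adj x y) (hxz : G.Adj x z) (hyz : G.Adj y z) :
    ¬ ReachableWithin (G.deleteEdges {s(x, y)}) {t | t ≠ z} x y := by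
  intro h
  refine hG.2 _ hxy (hG.1.deleteEdges fun v hvx hvy => ?_)
  by_cases hvz : v = z
  · exact hvz ▸ h
  have hxz' : (G.deleteEdges {s(x, y)}).Adj x z :=
    deleteEdges_adj.2 ⟨hxz, by rw [Set.mem_singleton_iff, Sym2.congr_right]; exact hyz.ne'⟩
  have hzy' : (G.deleteEdges {s(x, y)}).Adj z y :=
    deleteEdges_adj.2 ⟨hyz.symm, by rw [Set.mem_singleton_iff, Sym2.congr_left]; exact hxz.ne'⟩
  exact .cons hxz' (Ne.symm hvx) (.cons hzy' (Ne.symm hvz) (.refl (Ne.symm hvy)))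

lemma false_of_reachableWithin_reachableWithin (hG : MinimallyTwoConnected G)
    (hxy : G.Adj x y) (hxz : G.Adj x z) (hyz : G.Adj y z)
    (hS : S ⊆ {t | t ≠ z}) (hyS : y ∉ S) (hT : T ⊆ {t | t ≠ z}) (hxT : x ∉ T)
    (hux : ReachableWithin G S u x) (huy : ReachableWithin G T u y) : False := by
  have hux' : ReachableWithin (G.deleteEdges {s(x, y)}) {t | t ≠ z} u x :=
    (Sym2.eq_swap ▸ hux.deleteEdges_of_notMem hyS).mono hS
  have huy' : ReachableWithin (G.deleteEdges {s(x, y)}) {t | t ≠ z} u y :=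
    (huy.deleteEdges_of_notMem hxT).mono hT
  exact hG.not_reachableWithin_deleteEdges hxy hxz hyz (hux'.symm.trans huy')

lemma cliqueFree_three (hG : MinimallyTwoConnected G) (hn : 4 ≤ Nat.card V) :
    G.CliqueFree 3 := by
  classical
  intro t ht
  obtain ⟨x, y, z, hxy, hxz, hyz, rfl⟩ := is3Clique_iff.1 ht
  obtain ⟨u, hu⟩ := Finset.exists_notMem_of_card_lt_natCard
    ((Finset.card_le_three (a := x) (b := y) (c := z)).trans_lt hn)
  simp only [Finset.mem_insert, Finset.mem_singleton, not_or] at hu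
  obtain ⟨hux, huy, huz⟩ := hu
  rcases (hG.1.reachableWithin huz hxz.ne).diff_or_diff hxy.ne with hx | hy
  · rcases (hG.1.reachableWithin hux hxy.ne').diff_or_diff hyz.ne with hy | hz
    · exact hG.false_of_reachableWithin_reachableWithin hxy hxz hyz
        Set.sdiff_subset (by simp) (fun t ht => ht.2) (by simp) hx hy
    · exact hG.false_of_reachableWithin_reachableWithin hxz hxy hyz.symm
        (fun t ht => ht.2) (by simp) (fun t ht => ht.2) (by simp) hx hz
  · rcases (hG.1.reachableWithin huy hyz.ne').diff_or_diff hxz.ne' with hz | hx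
    · exact hG.false_of_reachableWithin_reachableWithin hyz hxy.symm hxz.symm
        (fun t ht => ht.2) (by simp) (fun t ht => ht.2) (by simp) hy hz
    · exact hG.false_of_reachableWithin_reachableWithin hxy hxz hyz
        (fun t ht => ht.2) (by simp) Set.sdiff_subset (by simp) hx hy

end MinimallyTwoConnected

end Connectivity

lemma Set.ncard_range_le_card_div_two {α β : Type*} [Fintype α] {f : α → β}
    (hf : ∀ a, ∃ b ≠ a, f b = f a) : (Set.range f).ncard ≤ Fintype.card α / 2 := by
  classical
  rw [← Set.image_univ, ← Finset.coe_univ, ← Finset.coe_image, Set.ncard_coe_finset,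
    Nat.le_div_iff_mul_le two_pos, mul_comm]
  refine Finset.mul_card_image_le_card _ 2 fun c hc => ?_
  obtain ⟨a, -, rfl⟩ := Finset.mem_image.1 hc
  obtain ⟨b, hba, hb⟩ := hf a
  exact Finset.one_lt_card.2 ⟨a, by simp, b, by simp [hb], hba.symm⟩

section Coloring

variable {G : SimpleGraph V} {τ : V → ℕ}

lemma TwoConnected.exists_ne_eq_of_isMVDColoring (h : TwoConnected G) (hG : G.CliqueFree 3)
    (hτ : IsMVDColoring G τ) (v : V) : ∃ w ≠ v, τ w = τ v := by
  classical
  obtain ⟨a, b, hva, hvb, hab⟩ := h.exists_adj_adj_ne_s7 v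
  have hnadj : ¬ G.Adj a b := fun hab => hG {v, a, b} (is3Clique_triple_iff.2 ⟨hva, hvb, hab⟩)
  obtain ⟨S, hS, hmono⟩ := hτ a b hab hnadj
  have hvS : v ∈ S := hS.mem_of_adj_of_adj_s7 hva.symm hvb
  obtain ⟨w, hwS, hwv⟩ := hS.exists_mem_of_reachableWithin (h.reachableWithin hva.ne' hvb.ne')
  exact ⟨w, hwv, hmono w hwS v hvS⟩

lemma mvd_le_of_forall {m : ℕ} (h : ∀ τ, IsMVDColoring G τ → (Set.range τ).ncard ≤ m) :
    mvd G ≤ m :=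
  csSup_le' fun _ ⟨τ, hτ, hk⟩ => hk ▸ h τ hτ

lemma IsMVDColoring.comp_embedding {W : Type*} {G' : SimpleGraph W} {τ : W → ℕ}
    (hτ : IsMVDColoring G' τ) (e : G ↪g G') : IsMVDColoring G (τ ∘ e) := by
  intro x y hne hnadj
  obtain ⟨S, hS, hmono⟩ := hτ (e x) (e y) (e.injective.ne hne) (e.map_adj_iff.not.2 hnadj)
  refine ⟨e ⁻¹' S, ⟨hS.1, hS.2.1, fun p => ?_⟩, fun u hu v hv => hmono _ hu _ hv⟩
  obtain ⟨w, hw, hwS⟩ := hS.2.2 (p.map e.toHom)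
  rw [Walk.support_map, List.mem_map] at hw
  obtain ⟨v, hv, rfl⟩ := hw
  exact ⟨v, hv, hwS⟩

lemma mvd_eq_of_forall {m : ℕ} (h : ∀ τ, IsMVDColoring G τ → (Set.range τ).ncard ≤ m)
    (hτ : IsMVDColoring G τ) (hτm : (Set.range τ).ncard = m) : mvd G = m :=
  IsGreatest.csSup_eq ⟨⟨τ, hτ, hτm⟩, fun _ ⟨σ, hσ, hk⟩ => hk ▸ h σ hσ⟩

end Coloring

lemma cycleGraph_adj_iff_val {n : ℕ} (hn : 2 ≤ n) {u v : Fin n} :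
    (cycleGraph n).Adj u v ↔ u.val + 1 = v.val ∨ v.val + 1 = u.val ∨
      (u.val = 0 ∧ v.val = n - 1) ∨ (v.val = 0 ∧ u.val = n - 1) := by
  have hsub (a b : Fin n) : (a - b).val = if b ≤ a then a.val - b.val else n + a.val - b.val := by
    split_ifs with h
    exacts [Fin.coe_sub_iff_le.2 h, Fin.coe_sub_iff_lt.2 (not_le.1 h)]
  rw [cycleGraph_adj', hsub, hsub]
  split_ifs <;> simp only [Fin.le_def, not_le] at * <;> omega

lemma cycleGraph_isCutBetween {n p q : ℕ} (hpq : p < q) (hq : q < n) {x y : Fin n}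
    (hx : x.val ≠ p ∧ x.val ≠ q) (hy : y.val ≠ p ∧ y.val ≠ q)
    (hxy : ¬ ((p < x.val ∧ x.val < q) ↔ (p < y.val ∧ y.val < q))) :
    IsCutBetween (cycleGraph n) x y {⟨p, hpq.trans hq⟩, ⟨q, hq⟩} := by
  refine isCutBetween_of_invariant (fun v : Fin n => p < v.val ∧ v.val < q) ?_ ?_ hxy ?_
  · simp [Fin.ext_iff, hx.1, hx.2]
  · simp [Fin.ext_iff, hy.1, hy.2]
  · intro u w huw hu hw
    simp only [Set.mem_insert_iff, Set.mem_singleton_iff, Fin.ext_iff, not_or] at hu hw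
    rw [cycleGraph_adj_iff_val (by omega)] at huw
    omega

lemma cycleGraph_isMVDColoring {n : ℕ} (hn : 4 ≤ n) :
    IsMVDColoring (cycleGraph n) fun i => i.val % (n / 2) := by
  intro x y hne hnadj
  wlog hxy : x < y generalizing x y
  · obtain ⟨S, hS, hmono⟩ := this y x hne.symm (fun h => hnadj h.symm)
      (lt_of_le_of_ne (not_lt.1 hxy) hne.symm)
    exact ⟨S, hS.symm, hmono⟩
  rw [cycleGraph_adj_iff_val (by omega)] at hnadj
  rw [Fin.lt_def] at hxy
  obtain ⟨p, hpn, hx, hy, hsep⟩ : ∃ p, p + n / 2 < n ∧ (x.val ≠ p ∧ x.val ≠ p + n / 2) ∧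
      (y.val ≠ p ∧ y.val ≠ p + n / 2) ∧
      ¬ ((p < x.val ∧ x.val < p + n / 2) ↔ (p < y.val ∧ y.val < p + n / 2)) := by
    by_cases h : x.val + 1 + n / 2 < n ∧ y.val + 1 < n
    · exact ⟨max (x.val + 1) (y.val + 1 - n / 2), by omega⟩
    · exact ⟨min (x.val - 1) (y.val - 1 - n / 2), by omega⟩
  refine ⟨_, cycleGraph_isCutBetween (by omega) hpn hx hy hsep, ?_⟩
  rintro _ (rfl | rfl) _ (rfl | rfl) <;> simp

lemma ncard_range_val_mod {n m : ℕ} (hm : m ≤ n) (hm0 : 0 < m) :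
    (Set.range fun i : Fin n => i.val % m).ncard = m := by
  have : (Set.range fun i : Fin n => i.val % m) = Set.Iio m := by
    ext k
    refine ⟨?_, fun hk => ⟨⟨k, lt_of_lt_of_le hk hm⟩, Nat.mod_eq_of_lt hk⟩⟩
    rintro ⟨i, rfl⟩
    exact Nat.mod_lt _ hm0
  rw [this, Set.ncard_Iio_nat]

/-- A minimally 2-connected graph of order `n ≥ 4` satisfies `mvd(G) ≤ ⌊n/2⌋`,
with equality when `G` is a cycle. -/
theorem stmt7 {V : Type*} [Fintype V] (G : SimpleGraph V)
    (hmin : MinimallyTwoConnected G) (hn : 4 ≤ Fintype.card V) :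
    mvd G ≤ Fintype.card V / 2 ∧
      (Nonempty (G ≃g SimpleGraph.cycleGraph (Fintype.card V)) →
        mvd G = Fintype.card V / 2) := by
  have hfree : G.CliqueFree 3 := hmin.cliqueFree_three (by rwa [Nat.card_eq_fintype_card])
  have hbound (τ : V → ℕ) (hτ : IsMVDColoring G τ) :
      (Set.range τ).ncard ≤ Fintype.card V / 2 :=
    Set.ncard_range_le_card_div_two (hmin.1.exists_ne_eq_of_isMVDColoring hfree hτ)
  refine ⟨mvd_le_of_forall hbound, fun ⟨e⟩ => ?_⟩
  refine mvd_eq_of_forall hbound ((cycleGraph_isMVDColoring hn).comp_embedding e.toEmbedding) ?_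
  rw [Function.Surjective.range_comp (f := e.toEmbedding) e.surjective]
  exact ncard_range_val_mod (Nat.div_le_self _ _) (by omega)
end

section
/- Let G be a connected graph of order n whose blocks are all minimally 2-connected triangle-free graphs. Then mvd(G) = n if and only if G is a tree. -/
open SimpleGraph

variable {V : Type*}

/-!
An MVD-coloring with `n` colors is injective, so its monochromatic cuts are single vertices;
conversely, if every two nonadjacent vertices are separated by a single vertex, then every
coloring is an MVD-coloring. Hence `mvd G = n` exactly when any two nonadjacent vertices are
separated by one vertex. In a tree the second vertex of the unique path does this. If `G` has a
cycle, the block containing it is triangle-free and has at least three vertices, hence contains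
two nonadjacent vertices, and no single vertex separates two vertices of a block.
-/

namespace SimpleGraph

variable {G : SimpleGraph V}

def SeparatedByVertices (G : SimpleGraph V) : Prop :=
  ∀ x y : V, x ≠ y → ¬ G.Adj x y → ∃ v, IsCutBetween G x y {v}

theorem ReachableWithin.mono {S T : Set V} (hST : S ⊆ T) {x y : V}
    (h : ReachableWithin G S x y) : ReachableWithin G T x y :=
  let ⟨p, hp⟩ := h
  ⟨p, fun v hv => hST (hp v hv)⟩

theorem Walk.reachableWithin_support {a b x y : V} (p : G.Walk a b)
    (hx : x ∈ p.support) (hy : y ∈ p.support) :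
    ReachableWithin G {v | v ∈ p.support} x y := by
  classical
  refine ⟨(p.takeUntil x hx).reverse.append (p.takeUntil y hy), fun v hv => ?_⟩
  rw [Walk.mem_support_append_iff, Walk.support_reverse, List.mem_reverse] at hv
  exact hv.elim (p.support_takeUntil_subset_support hx ·) (p.support_takeUntil_subset_support hy ·)

theorem Walk.IsPath.reachableWithin_support_diff_end {a b x y : V} {p : G.Walk a b}
    (hp : p.IsPath) (hx : x ∈ p.support) (hy : y ∈ p.support) (hxb : x ≠ b) (hyb : y ≠ b) :
    ReachableWithin G ({v | v ∈ p.support} \ {b}) x y := by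
  classical
  have avoid {z : V} (hz : z ∈ p.support) (hzb : z ≠ b) {v : V}
      (hv : v ∈ (p.takeUntil z hz).support) : v ∈ {v | v ∈ p.support} \ {b} :=
    ⟨p.support_takeUntil_subset_support hz hv, fun hvb =>
      Walk.endpoint_notMem_support_takeUntil hp hz hzb.symm (Set.mem_singleton_iff.mp hvb ▸ hv)⟩
  refine ⟨(p.takeUntil x hx).reverse.append (p.takeUntil y hy), fun v hv => ?_⟩
  rw [Walk.mem_support_append_iff, Walk.support_reverse, List.mem_reverse] at hv
  exact hv.elim (avoid hx hxb) (avoid hy hyb)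

theorem Walk.connectedOn_support {a b : V} (p : G.Walk a b) :
    ConnectedOn G {x | x ∈ p.support} :=
  ⟨⟨a, p.start_mem_support⟩, fun _ hx _ hy => p.reachableWithin_support hx hy⟩

/-- Rotating the cycle to start at `u`, its tail is a path through all other vertices
ending at `u`. -/
theorem Walk.IsCycle.noCutVertexOn_support {v : V} {c : G.Walk v v} (hc : c.IsCycle) :
    NoCutVertexOn G {x | x ∈ c.support} := by
  classical
  intro u hu x hx y hy
  set d := c.rotate u hu
  have hd : d.IsCycle := hc.rotate hu
  have mem_tail {z : V} (hz : z ∈ {x | x ∈ c.support} \ {u}) : z ∈ d.tail.support := by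
    have hzd : z ∈ d.support := (c.mem_support_rotate_iff u hu).mpr hz.1
    rw [← Walk.cons_support_tail hd.not_nil] at hzd
    exact (List.mem_cons.mp hzd).resolve_left hz.2
  refine ReachableWithin.mono ?_ <| hd.isPath_tail.reachableWithin_support_diff_end
    (mem_tail hx) (mem_tail hy) hx.2 hy.2
  rintro z ⟨hz, hzu⟩
  refine ⟨(c.mem_support_rotate_iff u hu).mp ?_, hzu⟩
  exact List.mem_of_mem_tail (d.support_tail_of_not_nil hd.not_nil ▸ hz)

theorem Walk.IsCycle.two_lt_ncard_support {v : V} {c : G.Walk v v} (hc : c.IsCycle) :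
    2 < {x | x ∈ c.support}.ncard := by
  classical
  calc 2 < c.tail.support.length := by
        rw [Walk.length_support, Walk.length_tail_add_one hc.not_nil]
        exact hc.three_le_length
    _ = {x | x ∈ c.tail.support}.ncard := by
        rw [← List.toFinset_card_of_nodup hc.isPath_tail.support_nodup, ← Set.ncard_coe_finset,
          List.coe_toFinset]
    _ ≤ {x | x ∈ c.support}.ncard := by
        refine Set.ncard_le_ncard (fun z hz => ?_) (List.finite_toSet _)
        exact List.mem_of_mem_tail (c.support_tail_of_not_nil hc.not_nil ▸ hz)

theorem exists_isBlock_superset [Finite V] {S : Set V} (hconn : ConnectedOn G S)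
    (hcut : NoCutVertexOn G S) : ∃ B, S ⊆ B ∧ IsBlock G B := by
  obtain ⟨B, ⟨hSB, hBconn, hBcut⟩, hBmax⟩ := (Set.toFinite
    {C : Set V | S ⊆ C ∧ ConnectedOn G C ∧ NoCutVertexOn G C}).exists_maximalFor id _
      ⟨S, subset_rfl, hconn, hcut⟩
  exact ⟨B, hSB, hBconn, hBcut, fun C hBC hCconn hCcut =>
    (hBmax ⟨hSB.trans hBC, hCconn, hCcut⟩ hBC).antisymm hBC⟩

theorem NoCutVertexOn.reachableWithin_diff_singleton {B : Set V} (hcut : NoCutVertexOn G B)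
    (hconn : ConnectedOn G B) {v x y : V} (hx : x ∈ B \ {v}) (hy : y ∈ B \ {v}) :
    ReachableWithin G (B \ {v}) x y := by
  by_cases hv : v ∈ B
  · exact hcut v hv x hx y hy
  · rw [Set.sdiff_singleton_eq_self hv] at hx hy ⊢
    exact hconn.2 x hx y hy

theorem NoCutVertexOn.not_isCutBetween_singleton {B : Set V} (hcut : NoCutVertexOn G B)
    (hconn : ConnectedOn G B) {v x y : V} (hx : x ∈ B) (hy : y ∈ B) :
    ¬ IsCutBetween G x y {v} := by
  rintro ⟨hxv, hyv, hsep⟩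
  obtain ⟨p, hp⟩ := hcut.reachableWithin_diff_singleton hconn ⟨hx, hxv⟩ ⟨hy, hyv⟩
  obtain ⟨z, hz, hzv⟩ := hsep p
  exact (hp z hz).2 hzv

theorem exists_not_adj_of_cliqueFree_induce [Finite V] {B : Set V}
    (hB : (G.induce B).CliqueFree 3) (hcard : 2 < B.ncard) :
    ∃ x ∈ B, ∃ y ∈ B, x ≠ y ∧ ¬ G.Adj x y := by
  classical
  by_contra! hadj
  obtain ⟨a, b, c, ha, hb, hc, hab, hac, hbc⟩ := (Set.two_lt_ncard_iff (Set.toFinite B)).mp hcard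
  refine hB {⟨a, ha⟩, ⟨b, hb⟩, ⟨c, hc⟩} (is3Clique_triple_iff.mpr ⟨?_, ?_, ?_⟩)
  · exact hadj a ha b hb hab
  · exact hadj a ha c hc hac
  · exact hadj b hb c hc hbc

theorem isMVDColoring_of_separatedByVertices (h : SeparatedByVertices G) (τ : V → ℕ) :
    IsMVDColoring G τ := by
  intro x y hxy hnadj
  obtain ⟨v, hv⟩ := h x y hxy hnadj
  exact ⟨{v}, hv, fun u hu w hw => by rw [Set.mem_singleton_iff.mp hu, Set.mem_singleton_iff.mp hw]⟩

theorem IsMVDColoring.separatedByVertices (hG : G.Connected) {τ : V → ℕ}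
    (hτ : IsMVDColoring G τ) (hinj : Function.Injective τ) : SeparatedByVertices G := by
  intro x y hxy hnadj
  obtain ⟨S, ⟨hxS, hyS, hsep⟩, hmono⟩ := hτ x y hxy hnadj
  obtain ⟨v, -, hv⟩ := hsep (hG.preconnected x y).some
  have hSv : S = {v} :=
    Set.eq_singleton_iff_unique_mem.mpr ⟨hv, fun u hu => hinj (hmono u hu v hv)⟩
  exact ⟨v, hSv ▸ ⟨hxS, hyS, hsep⟩⟩

theorem ncard_range_le_card [Finite V] (τ : V → ℕ) : (Set.range τ).ncard ≤ Nat.card V := by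
  rw [← Set.image_univ, ← Set.ncard_univ]
  exact Set.ncard_image_le Set.finite_univ

theorem mvd_le_card [Finite V] : mvd G ≤ Nat.card V :=
  csSup_le' <| by rintro _ ⟨τ, -, rfl⟩; exact ncard_range_le_card τ

theorem mvd_eq_card_iff_separatedByVertices [Finite V] (hG : G.Connected) :
    mvd G = Nat.card V ↔ SeparatedByVertices G := by
  have hbdd : BddAbove {k | ∃ τ : V → ℕ, IsMVDColoring G τ ∧ (Set.range τ).ncard = k} :=
    ⟨Nat.card V, by rintro _ ⟨τ, -, rfl⟩; exact ncard_range_le_card τ⟩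
  constructor
  · intro hmvd
    have hne : {k | ∃ τ : V → ℕ, IsMVDColoring G τ ∧ (Set.range τ).ncard = k}.Nonempty := by
      by_contra! hempty
      have := hG.nonempty
      have : 0 < Nat.card V := Nat.card_pos
      rw [← hmvd, mvd, hempty, csSup_empty] at this
      exact this.false
    obtain ⟨τ, hτ, hcard⟩ := Nat.sSup_mem hne hbdd
    rw [← mvd, hmvd, ← Set.image_univ, ← Set.ncard_univ, Set.ncard_image_iff Set.finite_univ,
      Set.injOn_univ] at hcard
    exact hτ.separatedByVertices hG hcard
  · intro h
    obtain ⟨τ, hτ⟩ := exists_injective_nat V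
    exact mvd_le_card.antisymm (le_csSup hbdd
      ⟨τ, isMVDColoring_of_separatedByVertices h τ, Set.ncard_range_of_injective hτ⟩)

theorem IsTree.separatedByVertices (hT : G.IsTree) : SeparatedByVertices G := by
  intro x y hxy hnadj
  obtain ⟨p, hp, -⟩ := hT.existsUnique_path x y
  have hadj : G.Adj x p.snd := p.adj_snd (Walk.not_nil_of_ne hxy)
  refine ⟨p.snd, fun h => ?_, fun h => ?_, fun r => ⟨p.snd, ?_, rfl⟩⟩
  · exact G.ne_of_adj hadj (Set.mem_singleton_iff.mp h)
  · exact hnadj (Set.mem_singleton_iff.mp h ▸ hadj)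
  · classical
    have := hT.isAcyclic.subsingleton_path x y
    have hrp : r.toPath = ⟨p, hp⟩ := Subsingleton.elim _ _
    have hsnd : p.snd ∈ (r.toPath : G.Walk x y).support := by
      rw [hrp]
      exact p.getVert_mem_support 1
    exact r.support_toPath_subset_support hsnd

theorem isTree_of_separatedByVertices [Finite V] (hG : G.Connected)
    (hB : ∀ B : Set V, IsBlock G B → (G.induce B).CliqueFree 3) (h : SeparatedByVertices G) :
    G.IsTree := by
  refine ⟨hG, fun v c hc => ?_⟩
  obtain ⟨B, hcB, hBlock⟩ :=
    exists_isBlock_superset c.connectedOn_support hc.noCutVertexOn_support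
  obtain ⟨x, hx, y, hy, hxy, hnadj⟩ := exists_not_adj_of_cliqueFree_induce
    (hB B hBlock) (hc.two_lt_ncard_support.trans_le (Set.ncard_le_ncard hcB))
  obtain ⟨w, hw⟩ := h x y hxy hnadj
  exact hBlock.2.1.not_isCutBetween_singleton hBlock.1 hx hy hw

end SimpleGraph

/-- For a connected graph whose blocks are all trivial or minimally 2-connected
triangle-free, `mvd(G) = n` iff `G` is a tree. -/
theorem stmt11 {V : Type*} [Fintype V] (G : SimpleGraph V) (hG : G.Connected)
    (hB : ∀ C : Set V, IsBlock G C →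
      ((G.induce C).CliqueFree 3 ∧
        (C.ncard ≤ 2 ∨ MinimallyTwoConnected (G.induce C)))) :
    mvd G = Fintype.card V ↔ G.IsTree := by
  rw [← Nat.card_eq_fintype_card, mvd_eq_card_iff_separatedByVertices hG]
  exact ⟨isTree_of_separatedByVertices hG (fun C hC => (hB C hC).1),
    IsTree.separatedByVertices⟩
end

section
/- Let G be a 2-connected graph with ear decomposition G_0, ..., G_t where the last ear P_{t-1} has at least one internal vertex, and let C be a cycle formed by P_{t-1} together with a shortest path in G_{t-1} between the endpoints of P_{t-1}, with |C| ≥ 4. If τ is an MVD-coloring of G, then every color used by τ on the internal vertices of P_{t-1} but not used on G_{t-1} colors at least two internal vertices of P_{t-1}; consequently |τ(G)| − |τ(G_{t-1})| ≤ ⌊(|P_{t-1}| − 2)/2⌋. -/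
open SimpleGraph

variable {V : Type*}

/-! Suppose a new color `c` appears on exactly one internal vertex `w` of the ear `p`, and let
`a`, `b` be the neighbours of `w` on `p`. They are nonadjacent: an edge `ab` of `p` would repeat a
vertex, and an edge `ab` of `H` forces `a = u`, `b = v`, so `p = u w v` with `uv` an edge of `H`,
and then the cycle `C` has only three vertices. A monochromatic cut `S` separating `a` from `b`
meets the walk `a w b`, so `w ∈ S` and `S` has color `c`, whence `S = {w}`. But the walk from `a`
back along `p` to `u`, through `H` to `v` and along `p` to `b` avoids `w`.

So every new color occupies at least two of the `|p| - 2` internal vertices of the ear. -/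

theorem Set.ncard_range_sub_ncard_image_le_half {α β : Type*} (f : α → β) {A I : Set α}
    (hI : I.Finite) (hcover : ∀ x, x ∈ A ∨ x ∈ I)
    (hfib : ∀ x ∈ I, f x ∉ f '' A → 2 ≤ {y | y ∈ I ∧ f y = f x}.ncard) :
    (Set.range f).ncard - (f '' A).ncard ≤ I.ncard / 2 := by
  classical
  set J := {x ∈ I | f x ∉ f '' A}
  have hJ : J.Finite := hI.subset (Set.sep_subset _ _)
  have hrange : Set.range f = f '' A ∪ f '' J := by
    refine Set.Subset.antisymm ?_
      (Set.union_subset (Set.image_subset_range _ _) (Set.image_subset_range _ _))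
    rintro _ ⟨x, rfl⟩
    by_cases hx : f x ∈ f '' A
    · exact Or.inl hx
    · exact Or.inr ⟨x, ⟨(hcover x).resolve_left fun h => hx ⟨x, h, rfl⟩, hx⟩, rfl⟩
  have hhalf : 2 * (f '' J).ncard ≤ J.ncard := by
    rw [← hJ.coe_toFinset, ← Finset.coe_image, Set.ncard_coe_finset, Set.ncard_coe_finset]
    refine Finset.mul_card_image_le_card _ 2 fun c hc => ?_
    obtain ⟨x, hx, rfl⟩ := Finset.mem_image.mp hc
    rw [hJ.mem_toFinset] at hx
    convert hfib x hx.1 hx.2 using 1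
    rw [← Set.ncard_coe_finset, Finset.coe_filter]
    congr 1
    ext y
    simp only [hJ.mem_toFinset, J, Set.mem_sep_iff]
    constructor
    · exact fun h => ⟨h.1.1, h.2⟩
    · exact fun h => ⟨⟨h.1, h.2 ▸ hx.2⟩, h.2⟩
  calc (Set.range f).ncard - (f '' A).ncard ≤ (f '' J).ncard := by
        rw [hrange]
        have := Set.ncard_union_le (f '' A) (f '' J)
        omega
    _ ≤ J.ncard / 2 := by omega
    _ ≤ I.ncard / 2 := Nat.div_le_div_right (Set.ncard_le_ncard (Set.sep_subset _ _) hI)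

namespace SimpleGraph.Walk

variable {G : SimpleGraph V} {u v w : V}

lemma exists_eq_append_cons_cons {p : G.Walk u v} (hw : w ∈ p.support) (hwu : w ≠ u)
    (hwv : w ≠ v) :
    ∃ (a b : V) (haw : G.Adj a w) (hwb : G.Adj w b) (r : G.Walk u a) (s : G.Walk b v),
      p = r.append (cons haw (cons hwb s)) := by
  obtain ⟨r, s, rfl⟩ := mem_support_iff_exists_append.mp hw
  obtain ⟨b, hwb, s, rfl⟩ := not_nil_iff.mp (not_nil_of_ne (p := s) hwv)
  induction r using concatRec with
  | Hnil => exact absurd rfl hwu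
  | Hconcat r haw _ => exact ⟨_, b, haw, hwb, r, s, concat_append r haw _⟩

lemma IsPath.ncard_internal {p : G.Walk u v} (hp : p.IsPath) :
    {x | x ∈ p.support ∧ x ≠ u ∧ x ≠ v}.ncard = p.length - 1 := by
  classical
  obtain rfl | huv := eq_or_ne u v
  · obtain rfl := (isPath_iff_nil.mp hp).eq_nil
    simp
  have hI :
      {x | x ∈ p.support ∧ x ≠ u ∧ x ≠ v} = ↑((p.support.toFinset.erase u).erase v) := by
    ext
    simp only [Set.mem_ofPred_eq, Finset.coe_erase, Set.mem_sdiff, Finset.mem_coe,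
      List.mem_toFinset, Set.mem_singleton_iff]
    tauto
  rw [hI, Set.ncard_coe_finset, Finset.card_erase_of_mem (by simp [huv.symm]),
    Finset.card_erase_of_mem (by simp), List.toFinset_card_of_nodup hp.support_nodup,
    length_support]
  omega

variable {a b : V} {haw : G.Adj a w} {hwb : G.Adj w b} {r : G.Walk u a} {s : G.Walk b v}

lemma IsPath.notMem_and_disjoint_of_append_cons_cons
    (hp : (r.append (cons haw (cons hwb s))).IsPath) :
    w ∉ r.support ∧ w ∉ s.support ∧ r.support.Disjoint s.support := by
  have := hp.support_nodup
  simp only [support_append, support_cons, List.tail_cons, List.nodup_append,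
    List.nodup_cons] at this
  obtain ⟨-, ⟨hws, -⟩, hrs⟩ := this
  exact ⟨fun hwr => hrs w hwr w (List.mem_cons_self ..) rfl, hws,
    fun x hxr hxs => hrs x hxr x (List.mem_cons_of_mem _ hxs) rfl⟩

lemma IsPath.not_toSubgraph_adj_of_append_cons_cons
    (hp : (r.append (cons haw (cons hwb s))).IsPath) :
    ¬ (r.append (cons haw (cons hwb s))).toSubgraph.Adj a b := by
  obtain ⟨hwr, hws, hrs⟩ := hp.notMem_and_disjoint_of_append_cons_cons
  have har : a ∈ r.support := r.end_mem_support
  have hbs : b ∈ s.support := s.start_mem_support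
  have hab : a ≠ b := fun h => hrs har (h ▸ hbs)
  simp only [toSubgraph_append, Walk.toSubgraph, Subgraph.sup_adj, subgraphOfAdj_adj, Sym2.eq,
    Sym2.rel_iff', Prod.mk.injEq, true_and, Prod.swap_prod_mk, and_true, not_or, not_and]
  refine ⟨fun h => hrs ((mem_verts_toSubgraph r).mp h.snd_mem) hbs, ?_, ?_,
    fun h => hrs har ((mem_verts_toSubgraph s).mp h.fst_mem)⟩
  · exact ⟨fun h => hws (h ▸ hbs), fun h => absurd h hab⟩
  · exact ⟨fun h => hwr (h ▸ har), fun _ h => hab h.symm⟩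

end SimpleGraph.Walk

namespace IsMVDColoring

variable {G : SimpleGraph V} {τ : V → ℕ}

theorem exists_color_eq_of_walk_avoiding (hτ : IsMVDColoring G τ) {a w b : V}
    (haw : G.Adj a w) (hwb : G.Adj w b) (hab : a ≠ b) (hnadj : ¬ G.Adj a b)
    (r : G.Walk a b) (hwr : w ∉ r.support) : ∃ x ∈ r.support, x ≠ w ∧ τ x = τ w := by
  obtain ⟨S, ⟨haS, hbS, hcut⟩, hmono⟩ := hτ a b hab hnadj
  have hwS : w ∈ S := by
    obtain ⟨x, hx, hxS⟩ := hcut (.cons haw (.cons hwb .nil))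
    simp only [Walk.support_cons, Walk.support_nil, List.mem_cons, List.not_mem_nil,
      or_false] at hx
    rcases hx with rfl | rfl | rfl
    exacts [absurd hxS haS, hxS, absurd hxS hbS]
  obtain ⟨x, hx, hxS⟩ := hcut r
  exact ⟨x, hx, fun h => hwr (h ▸ hx), hmono x hxS w hwS⟩

end IsMVDColoring

section Ear

variable {G : SimpleGraph V} {H : G.Subgraph} {u v : V} {p : G.Walk u v}

lemma mem_verts_or_internal (hu : u ∈ H.verts) (hv : v ∈ H.verts)
    (hint : ∀ x ∈ p.support, x = u ∨ x = v ∨ x ∉ H.verts) (htop : H ⊔ p.toSubgraph = ⊤)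
    (x : V) : x ∈ H.verts ∨ x ∈ {x | x ∈ p.support ∧ x ≠ u ∧ x ≠ v} := by
  have hx : x ∈ (H ⊔ p.toSubgraph).verts := htop ▸ Set.mem_univ x
  rw [Subgraph.verts_sup, Set.mem_union, Walk.mem_verts_toSubgraph] at hx
  rcases hx with hxH | hxp
  · exact Or.inl hxH
  rcases hint x hxp with rfl | rfl | hxH
  exacts [Or.inl hu, Or.inl hv, Or.inr ⟨hxp, fun h => hxH (h ▸ hu), fun h => hxH (h ▸ hv)⟩]

lemma not_adj_of_ear {a w b : V} {haw : G.Adj a w} {hwb : G.Adj w b} {r : G.Walk u a}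
    {s : G.Walk b v} (hrs : p = r.append (.cons haw (.cons hwb s))) (hp : p.IsPath)
    (hint : ∀ x ∈ p.support, x = u ∨ x = v ∨ x ∉ H.verts) (htop : H ⊔ p.toSubgraph = ⊤)
    (hchord : H.Adj u v → 3 ≤ p.length) : ¬ G.Adj a b := by
  subst hrs
  obtain ⟨-, -, hdisj⟩ := hp.notMem_and_disjoint_of_append_cons_cons
  intro hab
  have hsup : (H ⊔ _).Adj a b := htop ▸ Subgraph.top_adj.mpr hab
  rcases Subgraph.sup_adj.mp hsup with hH | hpab
  swap
  · exact hp.not_toSubgraph_adj_of_append_cons_cons hpab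
  have hap : a ∈ (r.append (.cons haw (.cons hwb s))).support := by simp
  have hbp : b ∈ (r.append (.cons haw (.cons hwb s))).support := by simp
  have hau : a = u := by
    rcases hint a hap with h | rfl | h
    exacts [h, absurd s.end_mem_support (hdisj r.end_mem_support), absurd hH.fst_mem h]
  have hbv : b = v := by
    rcases hint b hbp with rfl | h | h
    exacts [absurd s.start_mem_support (hdisj r.start_mem_support), h, absurd hH.snd_mem h]
  subst hau hbv
  have hr : r.length = 0 :=
    Walk.length_eq_zero_iff.mpr (Walk.isPath_iff_nil.mp hp.of_append_left)
  have hs : s.length = 0 :=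
    Walk.length_eq_zero_iff.mpr (Walk.isPath_iff_nil.mp hp.of_append_right.of_cons.of_cons)
  have := hchord hH
  simp only [Walk.length_append, Walk.length_cons, hr, hs] at this
  omega

theorem IsMVDColoring.two_le_ncard_internal_of_new_color {τ : V → ℕ}
    (hτ : IsMVDColoring G τ) (hp : p.IsPath) (hu : u ∈ H.verts) (hv : v ∈ H.verts)
    (hint : ∀ x ∈ p.support, x = u ∨ x = v ∨ x ∉ H.verts) (htop : H ⊔ p.toSubgraph = ⊤)
    (hH : ReachableWithin G H.verts u v) (hchord : H.Adj u v → 3 ≤ p.length)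
    {w : V} (hw : w ∈ p.support) (hwu : w ≠ u) (hwv : w ≠ v) (hnew : τ w ∉ τ '' H.verts) :
    2 ≤ {x | x ∈ p.support ∧ x ≠ u ∧ x ≠ v ∧ τ x = τ w}.ncard := by
  obtain ⟨q, hqH⟩ := hH
  obtain ⟨a, b, haw, hwb, r, s, hrs⟩ := Walk.exists_eq_append_cons_cons hw hwu hwv
  have hnadj := not_adj_of_ear hrs hp hint htop hchord
  subst hrs
  obtain ⟨hwr, hws, hdisj⟩ := hp.notMem_and_disjoint_of_append_cons_cons
  have hab : a ≠ b := fun h => hdisj r.end_mem_support (h ▸ s.start_mem_support)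
  have hwq : w ∉ q.support := fun h => hnew ⟨w, hqH w h, rfl⟩
  obtain ⟨x, hx, hxw, hxc⟩ := hτ.exists_color_eq_of_walk_avoiding haw hwb hab hnadj
    (r.reverse.append (q.append s.reverse)) (by simp [hwr, hws, hwq])
  have hxH : x ∉ H.verts := fun h => hnew ⟨x, h, hxc⟩
  have hxp : x ∈ (r.append (.cons haw (.cons hwb s))).support := by
    have hxq : x ∉ q.support := fun h => hxH (hqH x h)
    simp only [Walk.mem_support_append_iff, Walk.support_reverse, List.mem_reverse, hxq,
      false_or] at hx
    simp only [Walk.mem_support_append_iff, Walk.support_cons, List.mem_cons]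
    tauto
  refine (Set.one_lt_ncard_iff ?_).mpr ⟨w, x, ⟨hw, hwu, hwv, rfl⟩,
    ⟨hxp, fun h => hxH (h ▸ hu), fun h => hxH (h ▸ hv), hxc⟩, hxw.symm⟩
  exact (List.finite_toSet _).subset fun y hy => hy.1

end Ear

theorem stmt16_general {V : Type*} (G : SimpleGraph V)
    (H : G.Subgraph) (u v : V) (p : G.Walk u v) (hp : p.IsPath)
    (hu : u ∈ H.verts) (hv : v ∈ H.verts)
    (hint : ∀ w ∈ p.support, w = u ∨ w = v ∨ w ∉ H.verts)
    (htop : H ⊔ p.toSubgraph = ⊤)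
    (q : G.Walk u v) (hqH : ∀ w ∈ q.support, w ∈ H.verts)
    (hqmin : ∀ q' : G.Walk u v, (∀ w ∈ q'.support, w ∈ H.verts) → q.length ≤ q'.length)
    (hC : 4 ≤ p.length + q.length)
    (τ : V → ℕ) (hτ : IsMVDColoring G τ) :
    (∀ c : ℕ, (∃ w ∈ p.support, w ≠ u ∧ w ≠ v ∧ τ w = c) → c ∉ τ '' H.verts →
      2 ≤ {w : V | w ∈ p.support ∧ w ≠ u ∧ w ≠ v ∧ τ w = c}.ncard) ∧
    (Set.range τ).ncard - (τ '' H.verts).ncard ≤ (p.length + 1 - 2) / 2 := by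
  have hchord : H.Adj u v → 3 ≤ p.length := fun huv => by
    have := hqmin (.cons (H.adj_sub huv) .nil) (by simp [hu, hv])
    simp only [Walk.length_cons, Walk.length_nil] at this
    omega
  have hnew := fun w (hw : w ∈ p.support) hwu hwv =>
    hτ.two_le_ncard_internal_of_new_color hp hu hv hint htop ⟨q, hqH⟩ hchord hw hwu hwv
  refine ⟨fun _ ⟨w, hw, hwu, hwv, hc⟩ => hc ▸ hnew w hw hwu hwv, ?_⟩
  calc _ ≤ {x | x ∈ p.support ∧ x ≠ u ∧ x ≠ v}.ncard / 2 :=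
        Set.ncard_range_sub_ncard_image_le_half τ
          ((List.finite_toSet _).subset fun _ hx => hx.1) (mem_verts_or_internal hu hv hint htop)
          fun x ⟨hx, hxu, hxv⟩ hxnew => by
            simpa only [Set.mem_ofPred_eq, and_assoc] using hnew x hx hxu hxv hxnew
    _ = (p.length + 1 - 2) / 2 := by rw [hp.ncard_internal]; omega

/-- In an MVD-coloring of a 2-connected graph `G = G_{t-1} ∪ P_{t-1}`, every new
color on the internal vertices of the last ear colors at least two of them, so
at most `⌊(|P_{t-1}|-2)/2⌋` new colors appear. -/
theorem stmt16 {V : Type*} [Fintype V] (G : SimpleGraph V) (h2 : TwoConnected G)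
    (H : G.Subgraph) (u v : V) (p : G.Walk u v) (hp : p.IsPath) (hlen : 2 ≤ p.length)
    (hu : u ∈ H.verts) (hv : v ∈ H.verts)
    (hint : ∀ w ∈ p.support, w = u ∨ w = v ∨ w ∉ H.verts)
    (htop : H ⊔ p.toSubgraph = ⊤)
    (q : G.Walk u v) (hq : q.IsPath) (hqH : ∀ w ∈ q.support, w ∈ H.verts)
    (hqmin : ∀ q' : G.Walk u v, (∀ w ∈ q'.support, w ∈ H.verts) → q.length ≤ q'.length)
    (hC : 4 ≤ p.length + q.length)
    (τ : V → ℕ) (hτ : IsMVDColoring G τ) :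
    (∀ c : ℕ, (∃ w ∈ p.support, w ≠ u ∧ w ≠ v ∧ τ w = c) → c ∉ τ '' H.verts →
      2 ≤ {w : V | w ∈ p.support ∧ w ≠ u ∧ w ≠ v ∧ τ w = c}.ncard) ∧
    (Set.range τ).ncard - (τ '' H.verts).ncard ≤ (p.length + 1 - 2) / 2 :=
  stmt16_general G H u v p hp hu hv hint htop q hqH hqmin hC τ hτ
end

section
/- For the graph P(1,1,1) (the complete bipartite graph K_{2,3}), mvd(P(1,1,1)) = 2. -/
open SimpleGraph

variable {V : Type*}

/-!
Two distinct vertices on the same side of a complete bipartite graph are nonadjacent and have the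
whole other side as common neighbours, so every cut separating them contains that side: an
MVD-coloring is constant on each side and uses at most two colors. Conversely, the neighbourhood of a
vertex separates it from every vertex not adjacent to it, and each neighbourhood lies in one side, so
coloring the two sides differently is an MVD-coloring.
-/

section General

variable {G : SimpleGraph V} {x y z : V}

theorem IsCutBetween.mem_of_adj_of_adj_s17 {S : Set V} (hS : IsCutBetween G x y S)
    (hxz : G.Adj x z) (hzy : G.Adj z y) : z ∈ S := by
  obtain ⟨v, hv, hvS⟩ := hS.2.2 (.cons hxz (.cons hzy .nil))
  simp only [Walk.support_cons, Walk.support_nil, List.mem_cons, List.not_mem_nil,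
    or_false] at hv
  rcases hv with rfl | rfl | rfl
  exacts [absurd hvS hS.1, hvS, absurd hvS hS.2.1]

theorem SimpleGraph.Walk.exists_adj_mem_support_of_ne (p : G.Walk x y) (hxy : x ≠ y) :
    ∃ v ∈ p.support, G.Adj x v := by
  cases p with
  | nil => exact absurd rfl hxy
  | cons h q => exact ⟨_, by simp, h⟩

theorem isCutBetween_neighborSet (hxy : x ≠ y) (hadj : ¬ G.Adj x y) :
    IsCutBetween G x y (G.neighborSet x) :=
  ⟨G.loopless.irrefl x, hadj, fun p => p.exists_adj_mem_support_of_ne hxy⟩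

theorem IsMVDColoring.of_monochromatic_neighborSet {τ : V → ℕ}
    (hτ : ∀ x, Monochromatic τ (G.neighborSet x)) : IsMVDColoring G τ :=
  fun x _ hxy hadj => ⟨_, isCutBetween_neighborSet hxy hadj, hτ x⟩

theorem IsMVDColoring.eq_of_adj_of_adj {τ : V → ℕ} (hτ : IsMVDColoring G τ)
    (hxy : x ≠ y) (hadj : ¬ G.Adj x y) {z w : V} (hxz : G.Adj x z) (hzy : G.Adj z y)
    (hxw : G.Adj x w) (hwy : G.Adj w y) : τ z = τ w := by
  obtain ⟨S, hS, hmono⟩ := hτ x y hxy hadj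
  exact hmono z (hS.mem_of_adj_of_adj_s17 hxz hzy) w (hS.mem_of_adj_of_adj_s17 hxw hwy)

theorem mvd_eq_of_isMVDColoring_of_forall_le {τ : V → ℕ} (hτ : IsMVDColoring G τ)
    (hle : ∀ σ : V → ℕ, IsMVDColoring G σ → (Set.range σ).ncard ≤ (Set.range τ).ncard) :
    mvd G = (Set.range τ).ncard :=
  IsGreatest.csSup_eq ⟨⟨τ, hτ, rfl⟩, by rintro _ ⟨σ, hσ, rfl⟩; exact hle σ hσ⟩

end General

section CompleteBipartite

variable (α β : Type*)

def sideColoring : α ⊕ β → ℕ := Sum.elim (fun _ => 0) (fun _ => 1)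

theorem isMVDColoring_sideColoring :
    IsMVDColoring (completeBipartiteGraph α β) (sideColoring α β) :=
  IsMVDColoring.of_monochromatic_neighborSet fun x u hu v hv => by
    rcases x with _ | _ <;> rcases u with _ | _ <;> rcases v with _ | _ <;>
      simp_all [sideColoring]

theorem ncard_range_sideColoring [Nonempty α] [Nonempty β] :
    (Set.range (sideColoring α β)).ncard = 2 := by
  have hrange : Set.range (sideColoring α β) = {0, 1} := by
    ext n
    constructor
    · rintro ⟨_ | _, rfl⟩ <;> simp [sideColoring]
    · rintro (rfl | rfl)
      exacts [⟨.inl (Classical.arbitrary α), rfl⟩, ⟨.inr (Classical.arbitrary β), rfl⟩]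
  rw [hrange, Set.ncard_pair zero_ne_one]

theorem IsMVDColoring.ncard_range_le_two_of_completeBipartiteGraph [Nontrivial α] [Nontrivial β]
    {τ : α ⊕ β → ℕ} (hτ : IsMVDColoring (completeBipartiteGraph α β) τ) :
    (Set.range τ).ncard ≤ 2 := by
  obtain ⟨a, a', ha⟩ := exists_pair_ne α
  obtain ⟨b, b', hb⟩ := exists_pair_ne β
  have hsub : Set.range τ ⊆ {τ (.inl a), τ (.inr b)} := by
    rintro _ ⟨_ | _, rfl⟩
    · left
      exact hτ.eq_of_adj_of_adj (x := .inr b) (y := .inr b') (by simpa) (by simp)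
        (by simp) (by simp) (by simp) (by simp)
    · right
      exact hτ.eq_of_adj_of_adj (x := .inl a) (y := .inl a') (by simpa) (by simp)
        (by simp) (by simp) (by simp) (by simp)
  exact (Set.ncard_le_ncard hsub (Set.toFinite _)).trans ((Set.ncard_insert_le _ _).trans (by simp))

theorem mvd_completeBipartiteGraph [Nontrivial α] [Nontrivial β] :
    mvd (completeBipartiteGraph α β) = 2 := by
  rw [← ncard_range_sideColoring α β]
  refine mvd_eq_of_isMVDColoring_of_forall_le (isMVDColoring_sideColoring α β) fun σ hσ => ?_
  rw [ncard_range_sideColoring]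
  exact hσ.ncard_range_le_two_of_completeBipartiteGraph α β

end CompleteBipartite

/-- `mvd(P(1,1,1)) = mvd(K_{2,3}) = 2`. -/
theorem stmt17 : mvd (completeBipartiteGraph (Fin 2) (Fin 3)) = 2 :=
  mvd_completeBipartiteGraph (Fin 2) (Fin 3)
end

section
/- If G is a cycle of order n ≥ 4 and τ is an MVD-coloring of G, then no color of τ is used on exactly one vertex; consequently |τ(G)| ≤ ⌊n/2⌋. -/
open SimpleGraph
open Fin.CommRing

variable {V : Type*}

lemma fin_val_one'' {n : ℕ} [NeZero n] (hn : 2 ≤ n) : ((1 : Fin n)).val = 1 := by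
  rw [Fin.val_one']; exact Nat.mod_eq_of_lt (by omega)

lemma cyc_adj {n : ℕ} [NeZero n] (hn : 2 ≤ n) (u : Fin n) : (cycleGraph n).Adj u (u + 1) := by
  rw [cycleGraph_adj']
  right
  have h1 : u + 1 - u = 1 := by ring
  rw [h1, fin_val_one'' hn]

lemma cyc_walk {n : ℕ} [NeZero n] (hn : 2 ≤ n) (i : Fin n) (m : ℕ) :
    ∃ p : (cycleGraph n).Walk i (i + (m : Fin n)),
      ∀ v ∈ p.support, ∃ j : ℕ, j ≤ m ∧ v = i + (j : Fin n) := by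
  induction m with
  | zero =>
    have h0 : i = i + ((0 : ℕ) : Fin n) := by simp
    refine ⟨(Walk.nil : (cycleGraph n).Walk i i).copy rfl h0, ?_⟩
    intro v hv
    simp only [Walk.support_copy, Walk.support_nil, List.mem_singleton] at hv
    exact ⟨0, le_refl 0, by simp [hv]⟩
  | succ m ih =>
    obtain ⟨p, hp⟩ := ih
    have hadj : (cycleGraph n).Adj (i + ((m : ℕ) : Fin n)) (i + (((m+1 : ℕ)) : Fin n)) := by
      have h2 : i + (((m+1 : ℕ)) : Fin n) = (i + ((m : ℕ) : Fin n)) + 1 := by push_cast; ring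
      rw [h2]; exact cyc_adj hn _
    refine ⟨p.concat hadj, ?_⟩
    intro v hv
    rw [Walk.support_concat, List.mem_append] at hv
    rcases hv with hv | hv
    · obtain ⟨j, hj, rfl⟩ := hp v hv
      exact ⟨j, by omega, rfl⟩
    · rw [List.mem_singleton] at hv
      exact ⟨m+1, le_refl _, hv⟩


/-- In an MVD-coloring of a cycle of order `n ≥ 4`, no color is used on exactly
one vertex; consequently at most `⌊n/2⌋` colors are used. -/
theorem stmt18 {n : ℕ} (hn : 4 ≤ n) {V : Type*} (G : SimpleGraph V)
    (h : Nonempty (G ≃g SimpleGraph.cycleGraph n))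
    (τ : V → ℕ) (hτ : IsMVDColoring G τ) :
    (∀ v : V, ∃ w : V, w ≠ v ∧ τ w = τ v) ∧ (Set.range τ).ncard ≤ n / 2 := by
  obtain ⟨e⟩ := h
  haveI : NeZero n := ⟨by omega⟩
  have hn2 : ((n - 2 : ℕ) : Fin n) = -2 := by
    rw [Nat.cast_sub (by omega : 2 ≤ n), Fin.natCast_self]
    push_cast
    ring
  have key : ∀ v : V, ∃ w : V, w ≠ v ∧ τ w = τ v := by
    intro v
    set i : Fin n := e v with hi
    have hvi : e.symm i = v := e.symm_apply_apply v
    set a : V := e.symm (i - 1) with ha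
    set b : V := e.symm (i + 1) with hb
    -- i-1 ≠ i+1
    have hab' : i - 1 ≠ i + 1 := by
      intro hcontra
      have h2 : (i + 1) - (i - 1) = ((2 : ℕ) : Fin n) := by push_cast; ring
      rw [← hcontra, sub_self] at h2
      have := congrArg Fin.val h2
      rw [Fin.val_zero, Fin.val_natCast, Nat.mod_eq_of_lt (by omega)] at this
      omega
    have hab : a ≠ b := fun hc => hab' (e.symm.injective hc)
    -- nonadjacent
    have hnadj' : ¬ (cycleGraph n).Adj (i - 1) (i + 1) := by
      rw [cycleGraph_adj']
      push_neg
      constructor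
      · have hd : (i - 1) - (i + 1) = ((n - 2 : ℕ) : Fin n) := by rw [hn2]; ring
        rw [hd, Fin.val_natCast, Nat.mod_eq_of_lt (by omega)]
        omega
      · have hd : (i + 1) - (i - 1) = ((2 : ℕ) : Fin n) := by push_cast; ring
        rw [hd, Fin.val_natCast, Nat.mod_eq_of_lt (by omega)]
        omega
    have hnadj : ¬ G.Adj a b := by
      rw [ha, hb, e.symm.map_adj_iff]
      exact hnadj'
    obtain ⟨S, ⟨haS, hbS, hcut⟩, hmono⟩ := hτ a b hab hnadj
    -- short walk a - v - b
    have h1 : G.Adj a v := by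
      rw [ha, ← hvi, e.symm.map_adj_iff]
      have := cyc_adj (n := n) (by omega) (i - 1)
      simpa using this
    have h2 : G.Adj v b := by
      rw [hb, ← hvi, e.symm.map_adj_iff]
      exact cyc_adj (by omega) i
    have hvS : v ∈ S := by
      obtain ⟨u, hu, huS⟩ := hcut (Walk.cons h1 (Walk.cons h2 Walk.nil))
      simp only [Walk.support_cons, Walk.support_nil, List.mem_cons,
        List.mem_singleton, List.not_mem_nil, or_false] at hu
      rcases hu with rfl | rfl | rfl
      · exact absurd huS haS
      · exact huS
      · exact absurd huS hbS
    -- long walk from b to a avoiding v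
    obtain ⟨p, hp⟩ := cyc_walk (n := n) (by omega) (i + 1) (n - 2)
    have hend : (i + 1) + ((n - 2 : ℕ) : Fin n) = i - 1 := by rw [hn2]; ring
    let q : G.Walk b a := ((p.copy rfl hend).map e.symm.toHom)
    obtain ⟨u, hu, huS⟩ := hcut q.reverse
    rw [Walk.support_reverse, List.mem_reverse] at hu
    simp only [q, Walk.support_map, List.mem_map, Walk.support_copy] at hu
    obtain ⟨w, hw, rfl⟩ := hu
    obtain ⟨j, hj, rfl⟩ := hp w hw
    have hwi : (i + 1) + ((j : ℕ) : Fin n) ≠ i := by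
      intro hcontra
      have : ((j + 1 : ℕ) : Fin n) = 0 := by
        push_cast
        linear_combination hcontra
      rw [Fin.natCast_eq_zero] at this
      have := Nat.le_of_dvd (by omega) this
      omega
    refine ⟨_, ?_, hmono _ huS v hvS⟩
    intro hc
    rw [← hvi] at hc
    exact hwi (e.symm.injective hc)
  refine ⟨key, ?_⟩
  haveI : Fintype V := Fintype.ofEquiv (Fin n) e.toEquiv.symm
  classical
  have hcard : Fintype.card V = n := by
    rw [Fintype.card_congr e.toEquiv, Fintype.card_fin]
  set R : Finset ℕ := Finset.image τ Finset.univ with hRdef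
  have hR : (Set.range τ).ncard = R.card := by
    rw [← Set.ncard_coe_finset]
    congr 1
    ext c
    simp [hRdef, Set.mem_range]
  have hsum : ∑ c ∈ R, (Finset.univ.filter (fun v => τ v = c)).card = n := by
    rw [← Finset.card_eq_sum_card_fiberwise
      (fun x _ => Finset.mem_image_of_mem τ (Finset.mem_univ x)), Finset.card_univ, hcard]
  have hlow : ∀ c ∈ R, 2 ≤ (Finset.univ.filter (fun v => τ v = c)).card := by
    intro c hc
    obtain ⟨v, _, hv⟩ := Finset.mem_image.mp hc
    obtain ⟨w, hwv, hww⟩ := key v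
    rw [show (2 : ℕ) = 1 + 1 from rfl, Nat.succ_le_iff, Finset.one_lt_card]
    exact ⟨w, by simp [hww, hv], v, by simp [hv], hwv⟩
  have hmul : 2 * R.card ≤ n := by
    calc 2 * R.card = R.card • 2 := by rw [smul_eq_mul, mul_comm]
    _ ≤ ∑ c ∈ R, (Finset.univ.filter (fun v => τ v = c)).card :=
        Finset.card_nsmul_le_sum R _ 2 hlow
    _ = n := hsum
  rw [hR]
  omega
end
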